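/- Let q be a prime power. Define N₀' = #{(β,γ) ∈ 𝔽_q² : γ^q − γ = 0 and β⁴ − β + γ(β² − β) = 0}. Then N₀' = 3q − 2; consequently q·(q − 1 + N₀') = 4q² − 3q, the q-th decagonal number. -/

import Mathlib

/-!
The Frobenius condition `γ ^ q = γ` holds for every `γ ∈ 𝔽_q`, and
`β⁴ - β + γ(β² - β) = β(β - 1)(β² + β + γ + 1)`. So the solutions are the lines `β = 0` and
`β = 1` (`q` points each) together with one point `γ = -(β² + β + 1)` over each of the other
`q - 2` values of `β`: `2q + (q - 2) = 3q - 2`.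
-/

open Finset

theorem quartic_add_mul_eq {R : Type*} [CommRing R] (β γ : R) :
    β ^ 4 - β + γ * (β ^ 2 - β) = β * (β - 1) * (β ^ 2 + β + γ + 1) := by
  ring

theorem quartic_add_mul_eq_zero_iff {R : Type*} [CommRing R] [IsDomain R] (β γ : R) :
    β ^ 4 - β + γ * (β ^ 2 - β) = 0 ↔ β = 0 ∨ β = 1 ∨ γ = -(β ^ 2 + β + 1) := by
  rw [quartic_add_mul_eq, mul_eq_zero, mul_eq_zero, sub_eq_zero, or_assoc]
  exact or_congr_right <| or_congr_right
    ⟨fun h => by linear_combination h, fun h => by linear_combination h⟩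

theorem card_subtype_mem_or_eq_graph {α β : Type*} [Fintype α] [Fintype β] [DecidableEq α]
    [DecidableEq β] (s : Finset α) (f : α → β) :
    Fintype.card {t : α × β // t.1 ∈ s ∨ t.2 = f t.1} =
      #s * Fintype.card β + (Fintype.card α - #s) := by
  have hsplit : univ.filter (fun t : α × β => t.1 ∈ s ∨ t.2 = f t.1) =
      s ×ˢ univ ∪ sᶜ.image (fun a => (a, f a)) := by
    ext ⟨a, b⟩
    by_cases ha : a ∈ s <;> aesop
  have hdisj : Disjoint (s ×ˢ (univ : Finset β)) (sᶜ.image fun a => (a, f a)) := by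
    simp only [disjoint_left, mem_product, mem_image, mem_compl]
    rintro _ ⟨ha, -⟩ ⟨a, ha', rfl⟩
    exact ha' ha
  rw [Fintype.card_subtype, hsplit, card_union_of_disjoint hdisj, card_product, card_univ,
    card_image_of_injective _ fun a a' h => (Prod.ext_iff.1 h).1, card_compl]

theorem card_zero_one_or_eq_graph {R : Type*} [Ring R] [Nontrivial R] [Fintype R]
    [DecidableEq R] (f : R → R) :
    Fintype.card {t : R × R // t.1 = 0 ∨ t.1 = 1 ∨ t.2 = f t.1} = 3 * Fintype.card R - 2 := by
  have hpair : #({0, 1} : Finset R) = 2 := card_pair zero_ne_one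
  have hq : 2 ≤ Fintype.card R := Fintype.one_lt_card
  have hmem (t : R × R) :
      (t.1 = 0 ∨ t.1 = 1 ∨ t.2 = f t.1) ↔ t.1 ∈ ({0, 1} : Finset R) ∨ t.2 = f t.1 := by
    simp [or_assoc]
  rw [Fintype.card_congr (Equiv.subtypeEquivRight hmem), card_subtype_mem_or_eq_graph, hpair]
  omega

theorem mul_sub_one_add_three_mul_sub_two (q : ℕ) :
    q * (q - 1 + (3 * q - 2)) = 4 * q ^ 2 - 3 * q := by
  rcases q with _ | k
  · rfl
  · have h₁ : k + 1 - 1 + (3 * (k + 1) - 2) = 4 * k + 1 := by omega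
    have h₂ : 4 * (k + 1) ^ 2 - 3 * (k + 1) = (k + 1) * (4 * k + 1) := by
      rw [Nat.sub_eq_of_eq_add]; ring
    rw [h₁, h₂]

theorem decagonal_count (F : Type*) [Field F] [Fintype F]
    (N₀' : ℕ)
    (hN₀' : N₀' = Nat.card {t : F × F //
        t.2 ^ Fintype.card F - t.2 = 0 ∧
        t.1 ^ 4 - t.1 + t.2 * (t.1 ^ 2 - t.1) = 0}) :
    N₀' = 3 * Fintype.card F - 2 ∧
      Fintype.card F * (Fintype.card F - 1 + N₀') =
        4 * Fintype.card F ^ 2 - 3 * Fintype.card F := by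
  classical
  have hcount : N₀' = 3 * Fintype.card F - 2 := by
    simp only [hN₀', FiniteField.pow_card, sub_self, true_and, quartic_add_mul_eq_zero_iff,
      Nat.card_eq_fintype_card]
    exact card_zero_one_or_eq_graph fun β => -(β ^ 2 + β + 1)
  exact ⟨hcount, hcount ▸ mul_sub_one_add_three_mul_sub_two (Fintype.card F)⟩
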